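/- arXiv:1910.10146 — 7 statements merged into one kernel-verified Lean document; each statement's English description precedes it below -/
import Mathlib

section
/- For the random cubical complex Q(n,p) on the d-dimensional discrete torus with n = m^d sites, the expected Euler characteristic satisfies E[χ(Q(n,p))] = m^d * Σ_{k=0}^d (-1)^k (d choose k) (1 - (1-p)^(2^(d-k))). -/
open MeasureTheory

/-- A site `y` is adjacent to the `k`-face `(x, S)` of the cubical grid on the
`d`-dimensional discrete torus `(ZMod m)^d`: `y = x - ε` where `ε i = 0` for `i ∈ S`
and `ε i ∈ {0, 1}` for `i ∉ S`. -/
def cubeAdjacent (d m : ℕ) (x : Fin d → ZMod m) (S : Finset (Fin d))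
    (y : Fin d → ZMod m) : Prop :=
  ∃ ε : Fin d → ZMod m, (∀ i, i ∈ S → ε i = 0) ∧ (∀ i, i ∉ S → ε i = 0 ∨ ε i = 1) ∧
    y = x - ε

/-- The face `(x, S)` is present in the configuration `ω` iff at least one adjacent
site is open. -/
def facePresent (d m : ℕ) (ω : (Fin d → ZMod m) → Bool)
    (x : Fin d → ZMod m) (S : Finset (Fin d)) : Prop :=
  ∃ y, cubeAdjacent d m x S y ∧ ω y = true

open scoped Classical in
/-- `numFaces d m k ω` is the number of `k`-faces present in the configuration `ω`. -/
noncomputable def numFaces (d m k : ℕ) [NeZero m] (ω : (Fin d → ZMod m) → Bool) : ℕ :=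
  (Finset.univ.filter
    (fun xS : (Fin d → ZMod m) × Finset (Fin d) =>
      xS.2.card = k ∧ facePresent d m ω xS.1 xS.2)).card

/-- The Bernoulli(p) measure on `Bool`. -/
noncomputable def bernoulliMeasure (p : ℝ) : Measure Bool :=
  (ENNReal.ofReal p) • Measure.dirac true + (ENNReal.ofReal (1 - p)) • Measure.dirac false

/-- The law of the random cubical complex `Q(n, p)`: each site of the discrete torus
`(ZMod m)^d` is open independently with probability `p`. -/
noncomputable def cubicalMeasure (d m : ℕ) [NeZero m] (p : ℝ) :
    Measure ((Fin d → ZMod m) → Bool) :=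
  Measure.pi fun _ => bernoulliMeasure p

/-- The Euler characteristic of a configuration `ω`:
`χ(ω) = Σ_{k=0}^d (-1)^k F_k(ω)`. -/
noncomputable def eulerChar (d m : ℕ) [NeZero m] (ω : (Fin d → ZMod m) → Bool) : ℝ :=
  ∑ k ∈ Finset.range (d + 1), (-1 : ℝ) ^ k * (numFaces d m k ω : ℝ)


/-! By linearity of expectation, `E[χ] = Σ_k (-1)^k Σ_{(x,S), |S| = k} P((x,S) present)`.
A face `(x,S)` is absent exactly when all of its adjacent sites are closed; for `m ≥ 2` the
offsets `ε ∈ {0,1}^(Sᶜ)` give `2^(d-|S|)` distinct sites, so by independence this has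
probability `(1-p)^(2^(d-|S|))`, the same for each of the `m^d · (d choose k)` faces of
dimension `k`. -/

open Finset

section Bernoulli

variable {p : ℝ}

theorem isProbabilityMeasure_bernoulliMeasure (hp0 : 0 ≤ p) (hp1 : p ≤ 1) :
    IsProbabilityMeasure (bernoulliMeasure p) := by
  constructor
  simp [bernoulliMeasure, ← ENNReal.ofReal_add hp0 (sub_nonneg.2 hp1)]

theorem bernoulliMeasure_singleton_false :
    bernoulliMeasure p {false} = ENNReal.ofReal (1 - p) := by
  simp [bernoulliMeasure]

variable {ι : Type*} [Fintype ι]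

theorem pi_bernoulliMeasure_forall_false (hp0 : 0 ≤ p) (hp1 : p ≤ 1) (A : Finset ι) :
    Measure.pi (fun _ : ι => bernoulliMeasure p) {ω | ∀ y ∈ A, ω y = false} =
      ENNReal.ofReal (1 - p) ^ #A := by
  have := isProbabilityMeasure_bernoulliMeasure hp0 hp1
  classical
  have hbox : {ω : ι → Bool | ∀ y ∈ A, ω y = false} =
      Set.pi Set.univ fun y => if y ∈ (A : Set ι) then {false} else Set.univ := by
    rw [Set.univ_pi_ite]; ext ω; simp
  rw [hbox, Measure.pi_pi]
  simp only [mem_coe, apply_ite, bernoulliMeasure_singleton_false, measure_univ,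
    prod_ite_mem,
    univ_inter, prod_const]

theorem pi_bernoulliMeasure_real_exists_true (hp0 : 0 ≤ p) (hp1 : p ≤ 1) (A : Finset ι) :
    (Measure.pi fun _ : ι => bernoulliMeasure p).real {ω | ∃ y ∈ A, ω y = true} =
      1 - (1 - p) ^ #A := by
  have := isProbabilityMeasure_bernoulliMeasure hp0 hp1
  have hcompl :
      {ω : ι → Bool | ∃ y ∈ A, ω y = true} = {ω | ∀ y ∈ A, ω y = false}ᶜ := by
    ext ω; simp
  rw [hcompl, probReal_compl_eq_one_sub (Set.toFinite _).measurableSet, measureReal_def,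
    pi_bernoulliMeasure_forall_false hp0 hp1, ENNReal.toReal_pow,
    ENNReal.toReal_ofReal (sub_nonneg.2 hp1)]

end Bernoulli

theorem card_piFinset_ite_singleton_pair {ι α : Type*} [Fintype ι] [DecidableEq ι]
    [DecidableEq α] {a b : α} (hab : a ≠ b) (S : Finset ι) :
    #(Fintype.piFinset fun i => if i ∈ S then {a} else {a, b}) = 2 ^ #Sᶜ := by
  simp [apply_ite card, card_pair hab, prod_ite, filter_not,
    ← compl_eq_univ_sdiff]

section Cubical

variable {d m : ℕ}

theorem cubeAdjacent_iff_sub_mem_piFinset (x : Fin d → ZMod m) (S : Finset (Fin d))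
    (y : Fin d → ZMod m) :
    cubeAdjacent d m x S y ↔
      x - y ∈ Fintype.piFinset fun i => if i ∈ S then {0} else {0, 1} := by
  simp only [cubeAdjacent, Fintype.mem_piFinset]
  constructor
  · rintro ⟨ε, hS, hSc, rfl⟩ i
    by_cases hi : i ∈ S <;> simp [hi, hS, hSc i]
  · intro h
    refine ⟨x - y, fun i hi => by simpa [hi] using h i, fun i hi => by simpa [hi] using h i, ?_⟩
    rw [sub_sub_cancel]

open scoped Classical in
theorem card_cubeAdjacent [NeZero m] (hm : 2 ≤ m) (x : Fin d → ZMod m) (S : Finset (Fin d)) :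
    #{y | cubeAdjacent d m x S y} = 2 ^ (d - #S) := by
  have : Fact (1 < m) := ⟨hm⟩
  have hbox : ({y | cubeAdjacent d m x S y} : Finset (Fin d → ZMod m)) =
      (Fintype.piFinset fun i => if i ∈ S then {0} else {0, 1}).image (x - ·) := by
    ext y
    rw [mem_filter_univ, cubeAdjacent_iff_sub_mem_piFinset, mem_image]
    exact ⟨fun h => ⟨x - y, h, sub_sub_cancel x y⟩,
      by rintro ⟨ε, hε, rfl⟩; rwa [sub_sub_cancel]⟩
  rw [hbox, card_image_of_injective _ (sub_right_injective (b := x)),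
    card_piFinset_ite_singleton_pair zero_ne_one, card_compl, Fintype.card_fin]

theorem card_faces_of_dim [NeZero m] (k : ℕ) :
    #{xS : (Fin d → ZMod m) × Finset (Fin d) | #xS.2 = k} = m ^ d * d.choose k := by
  rw [← univ_product_univ, filter_product_right (q := fun S => #S = k),
    card_product, card_univ, univ_filter_card_eq, card_powersetCard]
  simp

theorem isProbabilityMeasure_cubicalMeasure [NeZero m] {p : ℝ} (hp0 : 0 ≤ p) (hp1 : p ≤ 1) :
    IsProbabilityMeasure (cubicalMeasure d m p) := by
  have := isProbabilityMeasure_bernoulliMeasure hp0 hp1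
  unfold cubicalMeasure
  infer_instance

theorem measureReal_facePresent [NeZero m] (hm : 2 ≤ m) {p : ℝ} (hp0 : 0 ≤ p) (hp1 : p ≤ 1)
    (x : Fin d → ZMod m) (S : Finset (Fin d)) :
    (cubicalMeasure d m p).real {ω | facePresent d m ω x S} = 1 - (1 - p) ^ 2 ^ (d - #S) := by
  classical
  have hset : {ω | facePresent d m ω x S} =
      {ω | ∃ y ∈ ({y | cubeAdjacent d m x S y} : Finset _), ω y = true} := by
    ext ω
    simp [facePresent]
  rw [hset, cubicalMeasure, pi_bernoulliMeasure_real_exists_true hp0 hp1, card_cubeAdjacent hm]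

open scoped Classical in
theorem numFaces_eq_sum_indicator [NeZero m] (k : ℕ) (ω : (Fin d → ZMod m) → Bool) :
    (numFaces d m k ω : ℝ) = ∑ xS : (Fin d → ZMod m) × Finset (Fin d) with #xS.2 = k,
      Set.indicator {ω | facePresent d m ω xS.1 xS.2} 1 ω := by
  rw [numFaces, ← filter_filter, natCast_card_filter]
  rfl

theorem integral_numFaces [NeZero m] (hm : 2 ≤ m) {p : ℝ} (hp0 : 0 ≤ p) (hp1 : p ≤ 1)
    (k : ℕ) :
    ∫ ω, (numFaces d m k ω : ℝ) ∂cubicalMeasure d m p =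
      m ^ d * d.choose k * (1 - (1 - p) ^ 2 ^ (d - k)) := by
  have := isProbabilityMeasure_cubicalMeasure (d := d) (m := m) hp0 hp1
  simp_rw [numFaces_eq_sum_indicator]
  rw [integral_finsetSum _ fun _ _ => Integrable.of_finite]
  simp_rw [integral_indicator_one (Set.toFinite _).measurableSet,
    measureReal_facePresent hm hp0 hp1]
  rw [sum_congr rfl fun xS hxS => by rw [(mem_filter.1 hxS).2], sum_const, card_faces_of_dim,
    nsmul_eq_mul]
  push_cast
  ring

end Cubical

theorem expected_euler_char_cubical_general (d m : ℕ) [NeZero m] (hm : 2 ≤ m)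
    (p : ℝ) (hp0 : 0 ≤ p) (hp1 : p ≤ 1) :
    ∫ ω, eulerChar d m ω ∂(cubicalMeasure d m p) =
      (m : ℝ) ^ d * ∑ k ∈ Finset.range (d + 1),
        (-1 : ℝ) ^ k * (d.choose k) * (1 - (1 - p) ^ (2 ^ (d - k))) := by
  have := isProbabilityMeasure_cubicalMeasure (d := d) (m := m) hp0 hp1
  simp only [eulerChar]
  rw [integral_finsetSum _ fun _ _ => Integrable.of_finite, mul_sum]
  refine sum_congr rfl fun k _ => ?_
  rw [integral_const_mul, integral_numFaces hm hp0 hp1]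
  ring

/-- The expected Euler characteristic of the random cubical complex `Q(n,p)`, `n = m^d`,
equals `m^d * Σ_{k=0}^d (-1)^k (d choose k) (1 - (1-p)^(2^(d-k)))`. -/
theorem expected_euler_char_cubical (d m : ℕ) [NeZero m] (hd : 1 ≤ d) (hm : 2 ≤ m)
    (p : ℝ) (hp0 : 0 ≤ p) (hp1 : p ≤ 1) :
    ∫ ω, eulerChar d m ω ∂(cubicalMeasure d m p) =
      (m : ℝ) ^ d * ∑ k ∈ Finset.range (d + 1),
        (-1 : ℝ) ^ k * (d.choose k) * (1 - (1 - p) ^ (2 ^ (d - k))) :=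
  expected_euler_char_cubical_general d m hm p hp0 hp1
end

section
/- For d = 3, the expected Euler characteristic curve per site of the random cubical complex, f_3(p) = Σ_{k=0}^3 (-1)^k (3 choose k) (1 - (1-p)^(2^(3-k))), has exactly two zeros in the open interval (0,1). -/
/-!
With `q = 1 - p`, the alternating sum collapses to `f₃ = q (1 - q) h(q)` for the sextic
`h = q⁶ + q⁵ + q⁴ + q³ - 2q² - 2q + 1`. Since `h(0) = h(1) = 1 > 0 > h(1/2)`, `h` has a root in
each of `(0, 1/2)` and `(1/2, 1)`, and its coefficients change sign only twice, so by Descartes'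
rule of signs it has no further positive root.
-/

/-- The expected Euler characteristic curve per site of the `d`-dimensional random
cubical site-percolation model on the flat torus:
`f_d(p) = Σ_{k=0}^d (-1)^k (d choose k) (1 - (1-p)^(2^(d-k)))`. -/
noncomputable def cubicalECCurve (d : ℕ) (p : ℝ) : ℝ :=
  ∑ k ∈ Finset.range (d + 1),
    (-1 : ℝ) ^ k * (d.choose k) * (1 - (1 - p) ^ (2 ^ (d - k)))

open Polynomial

theorem Polynomial.encard_setOf_pos_isRoot_le_signVariations {R : Type*}
    [CommRing R] [LinearOrder R] [IsStrictOrderedRing R] {P : R[X]} (hP : P ≠ 0) :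
    {x : R | 0 < x ∧ P.IsRoot x}.encard ≤ P.signVariations := by
  have hset : {x : R | 0 < x ∧ P.IsRoot x} = ↑(P.roots.filter (0 < ·)).toFinset := by
    ext x
    simp [hP, and_comm]
  rw [hset, Set.encard_coe_eq_coe_finsetCard]
  norm_cast
  calc _ ≤ (P.roots.filter (0 < ·)).card := Multiset.toFinset_card_le _
    _ = P.roots.countP (0 < ·) := (Multiset.countP_eq_card_filter _ _).symm
    _ ≤ P.signVariations := roots_countP_pos_le_signVariations P

noncomputable def cubicalECCofactor : ℝ[X] :=
  X ^ 6 + X ^ 5 + X ^ 4 + X ^ 3 - C 2 * X ^ 2 - C 2 * X + 1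

lemma cubicalECCurve_three_eq (p : ℝ) :
    cubicalECCurve 3 p = p * (1 - p) * cubicalECCofactor.eval (1 - p) := by
  simp [cubicalECCurve, cubicalECCofactor, Finset.sum_range_succ]
  ring

lemma cubicalECCurve_three_eq_zero_iff {p : ℝ} (hp : p ∈ Set.Ioo 0 1) :
    cubicalECCurve 3 p = 0 ↔ cubicalECCofactor.IsRoot (1 - p) := by
  have hp₀ : p ≠ 0 := hp.1.ne'
  have hp₁ : 1 - p ≠ 0 := (sub_pos.2 hp.2).ne'
  simp [cubicalECCurve_three_eq, hp₀, hp₁, IsRoot]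

lemma natDegree_cubicalECCofactor : cubicalECCofactor.natDegree = 6 := by
  unfold cubicalECCofactor
  compute_degree!

lemma cubicalECCofactor_ne_zero : cubicalECCofactor ≠ 0 :=
  ne_zero_of_natDegree_gt (n := 0) (by rw [natDegree_cubicalECCofactor]; norm_num)

lemma coeffList_cubicalECCofactor :
    cubicalECCofactor.coeffList = [1, 1, 1, 1, -2, -2, 1] := by
  rw [coeffList, degree_eq_natDegree cubicalECCofactor_ne_zero, natDegree_cubicalECCofactor]
  simp [cubicalECCofactor, coeff_X, coeff_one, coeff_X_pow, List.range_succ]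

lemma signVariations_cubicalECCofactor : cubicalECCofactor.signVariations = 2 := by
  rw [signVariations, coeffList_cubicalECCofactor]
  norm_num [List.destutter, List.destutter']

lemma encard_roots_cubicalECCofactor_Ioo_le :
    {q : ℝ | q ∈ Set.Ioo 0 1 ∧ cubicalECCofactor.IsRoot q}.encard ≤ 2 := by
  calc _ ≤ {q : ℝ | 0 < q ∧ cubicalECCofactor.IsRoot q}.encard :=
        Set.encard_le_encard fun q hq => ⟨hq.1.1, hq.2⟩
    _ ≤ cubicalECCofactor.signVariations :=
        encard_setOf_pos_isRoot_le_signVariations cubicalECCofactor_ne_zero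
    _ = 2 := by rw [signVariations_cubicalECCofactor]; rfl

lemma two_le_encard_roots_cubicalECCofactor_Ioo :
    2 ≤ {q : ℝ | q ∈ Set.Ioo 0 1 ∧ cubicalECCofactor.IsRoot q}.encard := by
  have hcont : Continuous fun q => cubicalECCofactor.eval q := cubicalECCofactor.continuous
  have h₀ : cubicalECCofactor.eval 0 = 1 := by norm_num [cubicalECCofactor]
  have h_half : cubicalECCofactor.eval (1 / 2) < 0 := by norm_num [cubicalECCofactor]
  have h₁ : cubicalECCofactor.eval 1 = 1 := by norm_num [cubicalECCofactor]
  obtain ⟨a, ha, ha_root⟩ := intermediate_value_Ioo' (a := 0) (b := 1 / 2) (by norm_num)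
    hcont.continuousOn (by rw [Set.mem_Ioo, h₀]; exact ⟨h_half, one_pos⟩)
  obtain ⟨b, hb, hb_root⟩ := intermediate_value_Ioo (a := 1 / 2) (b := 1) (by norm_num)
    hcont.continuousOn (by rw [Set.mem_Ioo, h₁]; exact ⟨h_half, one_pos⟩)
  calc (2 : ℕ∞) = ({a, b} : Set ℝ).encard := (Set.encard_pair (ha.2.trans hb.1).ne).symm
    _ ≤ _ := by
      refine Set.encard_le_encard (Set.insert_subset ?_ (Set.singleton_subset_iff.2 ?_))
      · exact ⟨⟨ha.1, by linarith [ha.2]⟩, ha_root⟩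
      · exact ⟨⟨by linarith [hb.1], hb.2⟩, hb_root⟩

/-- For `d = 3`, the expected Euler characteristic curve per site of the random
cubical complex has exactly two zeros in the open interval `(0,1)`. -/
theorem cubical_ec_curve_zeros_dim_three :
    {p : ℝ | p ∈ Set.Ioo (0 : ℝ) 1 ∧ cubicalECCurve 3 p = 0}.encard = 2 := by
  have hS : {p : ℝ | p ∈ Set.Ioo (0 : ℝ) 1 ∧ cubicalECCurve 3 p = 0} =
      (1 - ·) '' {q : ℝ | q ∈ Set.Ioo 0 1 ∧ cubicalECCofactor.IsRoot q} := by
    rw [Set.image_eq_preimage_of_inverse (f := fun q : ℝ => 1 - q) (g := fun q : ℝ => 1 - q)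
      (sub_sub_cancel 1) (sub_sub_cancel 1)]
    ext p
    constructor
    · rintro ⟨hp, hp_zero⟩
      exact ⟨⟨by linarith [hp.2], by linarith [hp.1]⟩,
        (cubicalECCurve_three_eq_zero_iff hp).1 hp_zero⟩
    · rintro ⟨hq, hq_root⟩
      have hp : p ∈ Set.Ioo (0 : ℝ) 1 := ⟨by linarith [hq.2], by linarith [hq.1]⟩
      exact ⟨hp, (cubicalECCurve_three_eq_zero_iff hp).2 hq_root⟩
  rw [hS, (sub_right_injective : Function.Injective fun q : ℝ => 1 - q).encard_image]
  exact le_antisymm encard_roots_cubicalECCofactor_Ioo_le two_le_encard_roots_cubicalECCofactor_Ioo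
end

section
/- For d = 4, the expected Euler characteristic curve per site of the random cubical complex, f_4(p) = Σ_{k=0}^4 (-1)^k (4 choose k) (1 - (1-p)^(2^(4-k))), has exactly three zeros in the open interval (0,1). -/
open Finset Polynomial

namespace Polynomial

variable {R : Type*}

theorem signVariations_le_card_support_sub_one [Semiring R] [LinearOrder R] (P : R[X]) :
    P.signVariations ≤ #P.support - 1 := by
  induction hn : #P.support generalizing P with
  | zero => simp [card_support_eq_zero.mp hn]
  | succ n ih =>
    rcases n with _ | n
    · obtain ⟨k, c, rfl⟩ := card_support_le_one_iff_monomial.mp hn.le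
      simp
    · calc P.signVariations ≤ P.eraseLead.signVariations + 1 :=
            signVariations_le_eraseLead_succ P
        _ ≤ n + 1 := by grw [ih _ (card_support_eraseLead' hn)]; simp

theorem encard_setOf_pos_isRoot_le [CommRing R] [LinearOrder R] [IsStrictOrderedRing R]
    {P : R[X]} (hP : P ≠ 0) :
    {x | 0 < x ∧ P.IsRoot x}.encard ≤ #P.support - 1 := by
  have hset : {x | 0 < x ∧ P.IsRoot x} = ↑(P.roots.filter (0 < ·)).toFinset := by
    ext x
    simp [mem_roots hP, and_comm]
  rw [hset, Set.encard_coe_eq_coe_finsetCard]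
  norm_cast
  calc #(P.roots.filter (0 < ·)).toFinset ≤ (P.roots.filter (0 < ·)).card :=
        Multiset.toFinset_card_le _
    _ = P.roots.countP (0 < ·) := (Multiset.countP_eq_card_filter _ _).symm
    _ ≤ P.signVariations := roots_countP_pos_le_signVariations P
    _ ≤ #P.support - 1 := signVariations_le_card_support_sub_one P

theorem card_support_sum_C_mul_X_pow_le [Semiring R] {ι : Type*} (s : Finset ι) (c : ι → R)
    (n : ι → ℕ) : #(∑ i ∈ s, C (c i) * X ^ n i).support ≤ #s := by
  classical
  refine (card_le_card fun m hm => ?_).trans (card_image_le (f := n))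
  rw [mem_support_iff, finsetSum_coeff] at hm
  obtain ⟨i, hi, hne⟩ := exists_ne_zero_of_sum_ne_zero hm
  rw [coeff_C_mul_X_pow] at hne
  exact mem_image.mpr ⟨i, hi, (ite_ne_right_iff.mp hne).1.symm⟩

end Polynomial

noncomputable def cubicalECPoly (d : ℕ) : ℝ[X] :=
  ∑ k ∈ range (d + 1), C ((-1 : ℝ) ^ k * d.choose k) * X ^ 2 ^ (d - k)

theorem cubicalECCurve_eq_neg_eval {d : ℕ} (hd : d ≠ 0) (p : ℝ) :
    cubicalECCurve d p = -(cubicalECPoly d).eval (1 - p) := by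
  have halt : ∑ k ∈ range (d + 1), (-1 : ℝ) ^ k * d.choose k = 0 := by
    exact_mod_cast Int.alternating_sum_range_choose_of_ne hd
  simp only [cubicalECCurve, cubicalECPoly, eval_finsetSum, eval_mul, eval_C, eval_pow, eval_X,
    mul_sub, mul_one, sum_sub_distrib, halt]
  ring

theorem cubicalECPoly_ne_zero (d : ℕ) : cubicalECPoly d ≠ 0 := by
  intro h
  have hcoeff := congrArg (coeff · (2 ^ d)) h
  simp only [cubicalECPoly, finsetSum_coeff, coeff_C_mul_X_pow, coeff_zero] at hcoeff
  rw [sum_eq_single 0] at hcoeff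
  · simp at hcoeff
  · intro k hk hk0
    refine if_neg fun heq => hk0 ?_
    have := Nat.pow_right_injective le_rfl heq
    rw [mem_range] at hk
    omega
  · simp

theorem card_support_cubicalECPoly_le (d : ℕ) : #(cubicalECPoly d).support ≤ d + 1 :=
  (card_support_sum_C_mul_X_pow_le _ _ _).trans (card_range _).le

theorem cubicalECPoly_isRoot_one {d : ℕ} (hd : d ≠ 0) : (cubicalECPoly d).IsRoot 1 := by
  simpa [cubicalECCurve] using (cubicalECCurve_eq_neg_eval hd 0).symm

theorem encard_zeros_cubicalECCurve_le {d : ℕ} (hd : d ≠ 0) :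
    {p : ℝ | p ∈ Set.Ioo 0 1 ∧ cubicalECCurve d p = 0}.encard ≤ d - 1 := by
  set Z := {t : ℝ | 0 < t ∧ (cubicalECPoly d).IsRoot t}
  have hmaps :
      Set.MapsTo (1 - ·) {p : ℝ | p ∈ Set.Ioo 0 1 ∧ cubicalECCurve d p = 0} (Z \ {1}) := by
    rintro p ⟨⟨hp0, hp1⟩, hp⟩
    rw [cubicalECCurve_eq_neg_eval hd, neg_eq_zero] at hp
    exact ⟨⟨by linarith, hp⟩, by simpa using hp0.ne'⟩
  have hZ : (Z \ {1}).encard + 1 ≤ d := by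
    have hone : 1 ∈ Z := ⟨one_pos, cubicalECPoly_isRoot_one hd⟩
    grw [Set.encard_sdiff_singleton_add_one hone,
      encard_setOf_pos_isRoot_le (cubicalECPoly_ne_zero d), card_support_cubicalECPoly_le]
    simp
  exact (Set.encard_le_encard_of_injOn hmaps sub_right_injective.injOn).trans
    (ENat.le_sub_of_add_le_right ENat.one_ne_top hZ)

theorem continuous_cubicalECCurve (d : ℕ) : Continuous (cubicalECCurve d) := by
  unfold cubicalECCurve
  fun_prop

theorem exists_mem_Ioo_eq_zero_of_mul_neg {f : ℝ → ℝ} {a b : ℝ} (hab : a ≤ b)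
    (hf : ContinuousOn f (Set.Icc a b)) (h : f a * f b < 0) : ∃ c ∈ Set.Ioo a b, f c = 0 := by
  rcases mul_neg_iff.mp h with ⟨ha, hb⟩ | ⟨ha, hb⟩
  · exact intermediate_value_Ioo' hab hf ⟨hb, ha⟩
  · exact intermediate_value_Ioo hab hf ⟨ha, hb⟩

/-- For `d = 4`, the expected Euler characteristic curve per site of the random
cubical complex has exactly three zeros in the open interval `(0,1)`. -/
theorem cubical_ec_curve_zeros_dim_four :
    {p : ℝ | p ∈ Set.Ioo (0 : ℝ) 1 ∧ cubicalECCurve 4 p = 0}.encard = 3 := by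
  have zero_between (a b : ℝ) (ha : 0 < a) (hab : a ≤ b) (hb : b < 1)
      (h : cubicalECCurve 4 a * cubicalECCurve 4 b < 0) :
      ∃ p ∈ Set.Ioo a b, p ∈ Set.Ioo (0 : ℝ) 1 ∧ cubicalECCurve 4 p = 0 := by
    obtain ⟨p, hp, hp0⟩ :=
      exists_mem_Ioo_eq_zero_of_mul_neg hab (continuous_cubicalECCurve 4).continuousOn h
    exact ⟨p, hp, ⟨ha.trans hp.1, hp.2.trans hb⟩, hp0⟩
  obtain ⟨p₁, ⟨-, hp₁⟩, hz₁⟩ := zero_between (3 / 100) (1 / 10) (by norm_num) (by norm_num)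
    (by norm_num) (by norm_num [cubicalECCurve, sum_range_succ, Nat.choose])
  obtain ⟨p₂, ⟨hp₂, hp₂'⟩, hz₂⟩ := zero_between (1 / 10) (1 / 2) (by norm_num) (by norm_num)
    (by norm_num) (by norm_num [cubicalECCurve, sum_range_succ, Nat.choose])
  obtain ⟨p₃, ⟨hp₃, -⟩, hz₃⟩ := zero_between (1 / 2) (9 / 10) (by norm_num) (by norm_num)
    (by norm_num) (by norm_num [cubicalECCurve, sum_range_succ, Nat.choose])
  refine le_antisymm ((encard_zeros_cubicalECCurve_le (d := 4) (by norm_num)).trans_eq rfl) ?_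
  calc (3 : ℕ∞) = ({p₁, p₂, p₃} : Set ℝ).encard :=
        (Set.encard_eq_three.mpr ⟨p₁, p₂, p₃, by linarith, by linarith, by linarith, rfl⟩).symm
    _ ≤ _ := Set.encard_le_encard <|
        Set.insert_subset hz₁ <| Set.insert_subset hz₂ <| Set.singleton_subset_iff.mpr hz₃
end

section
/- For every d ≥ 1 and every real p, the expected Euler characteristic curve per cell of the random permutahedral complex satisfies the symmetry g_d(p) = (-1)^(d-1) * g_d(1-p), where g_d(p) = Σ_{k=0}^d (-1)^k c_k(d) (1 - (1-p)^(d+1-k)) and c_k(d) = (number of surjections from Fin(d+1) onto Fin(d+1-k)) / (d+1-k). -/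
/-!
Write `S(n, j)` for the number of surjections `Fin n → Fin j` and `F_n = ∑ⱼ S(n, j) Xʲ` for the
Fubini (ordered Bell) polynomial. Inclusion–exclusion gives `S(n, j) = ∑ₘ (-1)ᵐ C(j, m) (j - m)ⁿ`,
hence `S(n + 1, j + 1) = (j + 1) (S(n, j) + S(n, j + 1))`. On coefficients this says that `c_k(d)` is
the coefficient of `X^(d+1-k)` in `(X + 1) F_d`, so that `g_d(p) = (-1)ᵈ ((X + 1) F_d)(p - 1)`, and
that `(X + 1) F_{n+1} = X (X + 1) ((X + 1) F_n)'`. For the reflection `σ x = -1 - x`, `X (X + 1)` is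
`σ`-invariant and `q ∘ σ = ε q` implies `q' ∘ σ = -ε q'`, so induction on `n` gives
`((X + 1) F_{n+1}) ∘ σ = (-1)ⁿ (X + 1) F_{n+1}`. At `x = p - 1`, `σ` is `p ↦ 1 - p`.
-/

/-- The number of `k`-faces per `d`-cell in the permutahedral tessellation:
`c_k(d) = (number of surjections from Fin(d+1) onto Fin(d+1-k)) / (d+1-k)`. -/
noncomputable def permFaceCount (d k : ℕ) : ℝ :=
  (Nat.card {f : Fin (d + 1) → Fin (d + 1 - k) // Function.Surjective f} : ℝ) /
    ((d + 1 - k : ℕ) : ℝ)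

/-- The expected Euler characteristic curve per cell of the random permutahedral
complex: `g_d(p) = Σ_{k=0}^d (-1)^k c_k(d) (1 - (1-p)^(d+1-k))`. -/
noncomputable def permECCurve (d : ℕ) (p : ℝ) : ℝ :=
  ∑ k ∈ Finset.range (d + 1),
    (-1 : ℝ) ^ k * permFaceCount d k * (1 - (1 - p) ^ (d + 1 - k))

open Finset Polynomial

theorem card_surjective_eq_sum (α β : Type*) [Fintype α] [Fintype β] :
    (Nat.card {f : α → β // Function.Surjective f} : ℤ) =
      ∑ m ∈ range (Fintype.card β + 1), (-1) ^ m * ((Fintype.card β).choose m : ℤ) *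
        ((Fintype.card β : ℤ) - m) ^ Fintype.card α := by
  classical
  let avoiding (b : β) : Finset (α → β) := {f | ∀ a, f a ≠ b}
  have hsurj : Nat.card {f : α → β // Function.Surjective f} =
      #(univ.inf fun b => (avoiding b)ᶜ) := by
    rw [Nat.card_eq_fintype_card]
    exact Fintype.card_of_subtype _ fun f => by simp [avoiding, mem_inf, Function.Surjective]
  have hinf (t : Finset β) : t.inf avoiding = Fintype.piFinset fun _ => tᶜ := by
    ext f
    simp only [mem_inf, Fintype.mem_piFinset, mem_compl, avoiding, mem_filter, mem_univ, true_and]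
    exact ⟨fun h a hfa => h _ hfa a rfl, fun h b hb a hab => h a (hab ▸ hb)⟩
  rw [hsurj, inclusion_exclusion_card_inf_compl]
  simp only [hinf, Fintype.card_piFinset, prod_const, card_compl, card_univ]
  rw [sum_powerset_apply_card
    (fun m => (-1 : ℤ) ^ m * ((Fintype.card β - m : ℕ) ^ Fintype.card α : ℕ))]
  refine sum_congr rfl fun m hm => ?_
  push_cast [Nat.cast_sub (Nat.lt_succ_iff.mp (mem_range.mp hm)), card_univ, nsmul_eq_mul]
  ring

noncomputable def surjCard (n k : ℕ) : ℕ := Nat.card {f : Fin n → Fin k // Function.Surjective f}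

theorem surjCard_eq_sum (n k : ℕ) :
    (surjCard n k : ℤ) = ∑ m ∈ range (k + 1), (-1) ^ m * (k.choose m : ℤ) * ((k : ℤ) - m) ^ n := by
  rw [surjCard]
  simpa only [Fintype.card_fin] using card_surjective_eq_sum (Fin n) (Fin k)

theorem surjCard_eq_zero_of_lt {n k : ℕ} (h : n < k) : surjCard n k = 0 := by
  rw [surjCard, Nat.card_eq_zero]
  left
  exact ⟨fun ⟨f, hf⟩ => absurd (Fintype.card_le_of_surjective f hf) (by simpa using h)⟩

theorem surjCard_succ_zero (n : ℕ) : surjCard (n + 1) 0 = 0 := by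
  simpa using surjCard_eq_sum (n + 1) 0

theorem surjCard_succ_succ (n k : ℕ) :
    surjCard (n + 1) (k + 1) = (k + 1) * (surjCard n k + surjCard n (k + 1)) := by
  set E : ℤ := ∑ m ∈ range (k + 1), (-1) ^ m * (k.choose m : ℤ) * ((k : ℤ) + 1 - m) ^ n
    with hE_def
  have hleft : (surjCard (n + 1) (k + 1) : ℤ) = (k + 1) * E := by
    rw [surjCard_eq_sum, sum_range_succ, mul_sum]
    simp only [Nat.cast_add, Nat.cast_one, sub_self, zero_pow n.succ_ne_zero, mul_zero, add_zero]
    refine sum_congr rfl fun m hm => ?_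
    have h := congrArg (Nat.cast : ℕ → ℤ) (Nat.choose_mul_succ_eq k m)
    push_cast [Nat.cast_sub (mem_range.mp hm).le] at h
    rw [pow_succ]
    linear_combination -((-1) ^ m * ((k : ℤ) + 1 - m) ^ n) * h
  have hE : E = ∑ m ∈ range (k + 1), (-1) ^ (m + 1) * (k.choose (m + 1) : ℤ) * ((k : ℤ) - m) ^ n
      + ((k : ℤ) + 1) ^ n := by
    rw [sum_range_succ (fun m => (-1) ^ (m + 1) * (k.choose (m + 1) : ℤ) * ((k : ℤ) - m) ^ n),
      Nat.choose_succ_self, hE_def, sum_range_succ']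
    push_cast [Nat.choose_zero_right]
    ring_nf
  have hright : (surjCard n (k + 1) : ℤ) = E - surjCard n k := by
    rw [hE, surjCard_eq_sum, surjCard_eq_sum, sum_range_succ']
    simp only [Nat.choose_succ_succ', Nat.cast_add, add_mul, mul_add, sum_add_distrib]
    push_cast
    simp only [add_sub_add_right_eq_sub, pow_succ, mul_neg_one, neg_mul, sum_neg_distrib,
      Nat.choose_zero_right]
    ring
  zify
  rw [hleft, hright]
  ring

section Fubini

variable (R : Type*) [CommRing R]

noncomputable def fubiniPoly (n : ℕ) : R[X] :=
  ∑ j ∈ range (n + 1), C (surjCard n j : R) * X ^ j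

variable {R}

@[simp]
theorem coeff_fubiniPoly (n j : ℕ) : (fubiniPoly R n).coeff j = surjCard n j := by
  simp only [fubiniPoly, finsetSum_coeff, coeff_C_mul_X_pow, sum_ite_eq, mem_range]
  split_ifs with hj
  · rfl
  · rw [surjCard_eq_zero_of_lt (by omega), Nat.cast_zero]

theorem coeff_X_add_one_mul_fubiniPoly (n j : ℕ) :
    ((X + 1) * fubiniPoly R n).coeff (j + 1) = (surjCard n j + surjCard n (j + 1) : R) := by
  rw [add_mul, coeff_add, coeff_X_mul, one_mul, coeff_fubiniPoly, coeff_fubiniPoly]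

theorem natDegree_X_add_one_mul_fubiniPoly_le (n : ℕ) :
    ((X + 1) * fubiniPoly R n).natDegree ≤ n + 1 := by
  rw [natDegree_le_iff_coeff_eq_zero]
  intro j hj
  obtain ⟨j, rfl⟩ : ∃ i, j = i + 1 := ⟨j - 1, by omega⟩
  rw [coeff_X_add_one_mul_fubiniPoly, surjCard_eq_zero_of_lt (by omega),
    surjCard_eq_zero_of_lt (by omega)]
  simp

theorem fubiniPoly_succ (n : ℕ) :
    fubiniPoly R (n + 1) = X * derivative ((X + 1) * fubiniPoly R n) := by
  ext j
  cases j with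
  | zero => simp [surjCard_succ_zero]
  | succ j =>
    rw [coeff_X_mul, coeff_derivative, coeff_X_add_one_mul_fubiniPoly, coeff_fubiniPoly,
      surjCard_succ_succ]
    push_cast
    ring

theorem X_add_one_mul_fubiniPoly_succ (n : ℕ) :
    (X + 1) * fubiniPoly R (n + 1) = X * (X + 1) * derivative ((X + 1) * fubiniPoly R n) := by
  rw [fubiniPoly_succ]
  ring

theorem derivative_comp_neg_X_sub_one (p : R[X]) :
    derivative (p.comp (-X - 1)) = -(derivative p).comp (-X - 1) := by
  simp [derivative_comp]

theorem X_mul_X_add_one_comp_neg_X_sub_one :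
    (X * (X + 1) : R[X]).comp (-X - 1) = X * (X + 1) := by
  simp only [mul_comp, add_comp, X_comp, one_comp]
  ring

theorem derivative_X_add_one_mul_fubiniPoly_comp (n : ℕ) :
    (derivative ((X + 1) * fubiniPoly R n)).comp (-X - 1) =
      (-1) ^ n * derivative ((X + 1) * fubiniPoly R n) := by
  induction n with
  | zero => simp [fubiniPoly]
  | succ n ih =>
    have hcomp : ((X + 1) * fubiniPoly R (n + 1)).comp (-X - 1) =
        (-1) ^ n * ((X + 1) * fubiniPoly R (n + 1)) := by
      rw [X_add_one_mul_fubiniPoly_succ, mul_comp, X_mul_X_add_one_comp_neg_X_sub_one, ih]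
      ring
    have h := congrArg derivative hcomp
    rw [derivative_comp_neg_X_sub_one, derivative_mul (f := (-1) ^ n)] at h
    simp only [derivative_pow, derivative_neg, derivative_one, neg_zero, mul_zero, zero_mul,
      zero_add] at h
    linear_combination -h

theorem X_add_one_mul_fubiniPoly_succ_comp (n : ℕ) :
    ((X + 1) * fubiniPoly R (n + 1)).comp (-X - 1) =
      (-1) ^ n * ((X + 1) * fubiniPoly R (n + 1)) := by
  rw [X_add_one_mul_fubiniPoly_succ, mul_comp, X_mul_X_add_one_comp_neg_X_sub_one,
    derivative_X_add_one_mul_fubiniPoly_comp]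
  ring

end Fubini

theorem Polynomial.neg_one_pow_mul_eval_neg {R : Type*} [CommRing R] (P : R[X]) {m : ℕ}
    (hP : P.natDegree ≤ m) (x : R) :
    (-1) ^ m * P.eval (-x) = ∑ k ∈ range (m + 1), (-1) ^ k * P.coeff (m - k) * x ^ (m - k) := by
  rw [eval_eq_sum_range' (Nat.lt_succ_of_le hP), mul_sum, ← sum_range_reflect]
  refine sum_congr rfl fun k hk => ?_
  obtain ⟨i, rfl⟩ : ∃ i, m = k + i := ⟨m - k, by rw [mem_range] at hk; omega⟩
  rw [show k + i + 1 - 1 - k = i by omega, show k + i - k = i by omega, pow_add, neg_pow x]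
  have hsq : ((-1 : R) ^ i) * (-1) ^ i = 1 := by rw [← mul_pow]; norm_num
  linear_combination (-1) ^ k * P.coeff i * x ^ i * hsq

theorem permFaceCount_eq_coeff {d k : ℕ} (hk : k ≤ d) :
    permFaceCount d k = ((X + 1) * fubiniPoly ℝ d).coeff (d + 1 - k) := by
  have h : permFaceCount d k = (surjCard (d + 1) (d + 1 - k) : ℝ) / ((d + 1 - k : ℕ) : ℝ) := rfl
  rw [h, show d + 1 - k = d - k + 1 by omega, coeff_X_add_one_mul_fubiniPoly, surjCard_succ_succ]
  push_cast
  field_simp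

theorem permECCurve_eq_eval (d : ℕ) (p : ℝ) :
    permECCurve d p = (-1) ^ d * ((X + 1) * fubiniPoly ℝ d).eval (p - 1) := by
  set P := (X + 1) * fubiniPoly ℝ d
  have hdeg : P.natDegree ≤ d + 1 := natDegree_X_add_one_mul_fubiniPoly_le d
  calc permECCurve d p
      = ∑ k ∈ range (d + 2), (-1) ^ k * P.coeff (d + 1 - k) * (1 - (1 - p) ^ (d + 1 - k)) := by
        rw [permECCurve, sum_range_succ _ (d + 1), Nat.sub_self, pow_zero, sub_self, mul_zero,
          add_zero]
        refine sum_congr rfl fun k hk => ?_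
        rw [permFaceCount_eq_coeff (Nat.lt_succ_iff.mp (mem_range.mp hk))]
    _ = (-1) ^ (d + 1) * P.eval (-1) - (-1) ^ (d + 1) * P.eval (-(1 - p)) := by
        rw [P.neg_one_pow_mul_eval_neg hdeg, P.neg_one_pow_mul_eval_neg hdeg, ← sum_sub_distrib]
        simp only [one_pow, mul_one, mul_sub]
    _ = (-1) ^ d * P.eval (p - 1) := by
        simp [P, pow_succ]

/-- The expected Euler characteristic curve per cell of the random permutahedral
complex satisfies the symmetry `g_d(p) = (-1)^(d-1) g_d(1-p)`. -/
theorem permutahedral_ec_curve_symmetry (d : ℕ) (hd : 1 ≤ d) (p : ℝ) :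
    permECCurve d p = (-1 : ℝ) ^ (d - 1) * permECCurve d (1 - p) := by
  obtain ⟨n, rfl⟩ : ∃ n, d = n + 1 := ⟨d - 1, by omega⟩
  set P := (X + 1) * fubiniPoly ℝ (n + 1)
  have hsymm : P.eval (-p) = (-1) ^ n * P.eval (p - 1) := by
    have h := congrArg (eval (p - 1)) (X_add_one_mul_fubiniPoly_succ_comp (R := ℝ) n)
    have hx : (-X - 1 : ℝ[X]).eval (p - 1) = -p := by simp
    rwa [eval_comp, hx, eval_mul (p := (-1) ^ n), eval_pow, eval_neg, eval_one] at h
  rw [permECCurve_eq_eval, permECCurve_eq_eval, Nat.add_sub_cancel, sub_sub_cancel_left, hsymm]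
  have hsq : ((-1 : ℝ) ^ n) * (-1) ^ n = 1 := by rw [← mul_pow]; norm_num
  linear_combination -(-1 : ℝ) ^ (n + 1) * P.eval (p - 1) * hsq
end

section
/- For d = 3 (the permutahedral tessellation of the flat 3-torus by truncated octahedra), the set of zeros in the open interval (0,1) of the expected Euler characteristic curve per cell g_3(p) = 6(1-(1-p)^4) - 12(1-(1-p)^3) + 7(1-(1-p)^2) - p is exactly {(3-√3)/6, (3+√3)/6}. -/
/-- For `d = 3` (the permutahedral tessellation of the flat 3-torus by truncated
octahedra), the zeros in `(0,1)` of the expected Euler characteristic curve per cell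
`g_3(p) = 6(1-(1-p)⁴) - 12(1-(1-p)³) + 7(1-(1-p)²) - p` are exactly
`(3-√3)/6` and `(3+√3)/6`. -/
theorem permutahedral_ec_curve_zeros_dim_three :
    {p : ℝ | p ∈ Set.Ioo (0 : ℝ) 1 ∧
        6 * (1 - (1 - p) ^ 4) - 12 * (1 - (1 - p) ^ 3) + 7 * (1 - (1 - p) ^ 2) - p = 0} =
      {(3 - Real.sqrt 3) / 6, (3 + Real.sqrt 3) / 6} := by
  have hs : Real.sqrt 3 ^ 2 = 3 := Real.sq_sqrt (by norm_num)
  have hs0 : (0:ℝ) ≤ Real.sqrt 3 := Real.sqrt_nonneg 3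
  have hs3 : Real.sqrt 3 < 3 := by
    nlinarith [hs, hs0]
  have hs1 : 1 < Real.sqrt 3 := by nlinarith [hs, hs0]
  ext p
  simp only [Set.mem_setOf_eq, Set.mem_Ioo, Set.mem_insert_iff, Set.mem_singleton_iff]
  constructor
  · rintro ⟨⟨hp0, hp1⟩, heq⟩
    have hfac : p * (1 - p) * (6 * p ^ 2 - 6 * p + 1) = 0 := by nlinarith [heq]
    have hq : 6 * p ^ 2 - 6 * p + 1 = 0 := by
      rcases mul_eq_zero.1 hfac with h | h
      · rcases mul_eq_zero.1 h with h | h <;> nlinarith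
      · exact h
    have : (6 * p - 3 - Real.sqrt 3) * (6 * p - 3 + Real.sqrt 3) = 0 := by nlinarith [hs]
    rcases mul_eq_zero.1 this with h | h
    · right; linarith
    · left; linarith
  · rintro (rfl | rfl)
    · refine ⟨⟨by linarith, by linarith⟩, by nlinarith [hs]⟩
    · refine ⟨⟨by linarith, by linarith⟩, by nlinarith [hs]⟩
end

section
/- For d = 4, the set of zeros in the open interval (0,1) of the expected Euler characteristic curve per cell of the random permutahedral complex, g_4(p) = 24(1-(1-p)^5) - 60(1-(1-p)^4) + 50(1-(1-p)^3) - 15(1-(1-p)^2) + p, is exactly {(3-√6)/6, 1/2, (3+√6)/6}. -/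
/-- For `d = 4`, the zeros in `(0,1)` of the expected Euler characteristic curve per
cell of the random permutahedral complex,
`g_4(p) = 24(1-(1-p)⁵) - 60(1-(1-p)⁴) + 50(1-(1-p)³) - 15(1-(1-p)²) + p`,
are exactly `(3-√6)/6`, `1/2`, and `(3+√6)/6`. -/
theorem permutahedral_ec_curve_zeros_dim_four :
    {p : ℝ | p ∈ Set.Ioo (0 : ℝ) 1 ∧
        24 * (1 - (1 - p) ^ 5) - 60 * (1 - (1 - p) ^ 4) + 50 * (1 - (1 - p) ^ 3)
          - 15 * (1 - (1 - p) ^ 2) + p = 0} =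
      {(3 - Real.sqrt 6) / 6, (1 : ℝ) / 2, (3 + Real.sqrt 6) / 6} := by
  have hs : Real.sqrt 6 ^ 2 = 6 := Real.sq_sqrt (by norm_num)
  have hs0 : (0 : ℝ) ≤ Real.sqrt 6 := Real.sqrt_nonneg 6
  have hs3 : Real.sqrt 6 < 3 := by nlinarith
  have hs1 : 1 < Real.sqrt 6 := by nlinarith
  set s := Real.sqrt 6 with hsdef
  ext p
  simp only [Set.mem_setOf_eq, Set.mem_Ioo, Set.mem_insert_iff, Set.mem_singleton_iff]
  constructor
  · rintro ⟨⟨hp0, hp1⟩, h⟩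
    have key : p * ((1 - p) * ((1 - 2 * p) * (12 * p ^ 2 - 12 * p + 1))) = 0 := by
      linear_combination h
    rcases mul_eq_zero.1 key with h1 | key
    · exact absurd h1 (ne_of_gt hp0)
    rcases mul_eq_zero.1 key with h1 | key
    · linarith
    rcases mul_eq_zero.1 key with h1 | hq
    · exact Or.inr (Or.inl (by linarith))
    · have : (p - (3 - s) / 6) * (p - (3 + s) / 6) = 0 := by
        linear_combination hq / 12 - hs / 36
      rcases mul_eq_zero.1 this with h1 | h1
      · exact Or.inl (by linarith)
      · exact Or.inr (Or.inr (by linarith))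
  · rintro (rfl | rfl | rfl)
    · have hq : 12 * ((3 - s) / 6) ^ 2 - 12 * ((3 - s) / 6) + 1 = 0 := by
        linear_combination hs / 3
      refine ⟨⟨by linarith, by linarith⟩, ?_⟩
      linear_combination ((3 - s) / 6 * (1 - (3 - s) / 6) * (1 - 2 * ((3 - s) / 6))) * hq
    · exact ⟨⟨by norm_num, by norm_num⟩, by norm_num⟩
    · have hq : 12 * ((3 + s) / 6) ^ 2 - 12 * ((3 + s) / 6) + 1 = 0 := by
        linear_combination hs / 3
      refine ⟨⟨by linarith, by linarith⟩, ?_⟩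
      linear_combination ((3 + s) / 6 * (1 - (3 + s) / 6) * (1 - 2 * ((3 + s) / 6))) * hq
end

section
/- For every natural number n, the probabilist's Hermite polynomial He_n, viewed as a real polynomial, has exactly n distinct real roots (it is a degree-n polynomial all of whose roots are real and simple). -/
/-!
Write `g_n(x) = He_n(x) e^{-x²/2}`. The recursion `He_{n+1} = X He_n - He_n'` says exactly that
`g_n' = -g_{n+1}`, and `g_n` vanishes at `±∞`. By Rolle's theorem `g_n'` has a zero strictly
between any two consecutive zeros of `g_n`, one below the smallest and one above the largest, so
`He_{n+1}` has at least one more real root than `He_n`. Since `He_n` has degree `n`, it has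
exactly `n` real roots.
-/

open Polynomial Filter Set Topology Real

section Rolle

variable {f f' : ℝ → ℝ}

theorem exists_hasDerivAt_eq_zero_of_tendsto_atBot_atTop {l : ℝ}
    (hf : ∀ x, HasDerivAt f (f' x) x) (hbot : Tendsto f atBot (𝓝 l))
    (htop : Tendsto f atTop (𝓝 l)) : ∃ c, f' c = 0 := by
  -- `tan` maps `(-π/2, π/2)` onto `ℝ`, so Rolle's theorem for `f ∘ tan` applies.
  have hcos : ∀ x ∈ Ioo (-(π / 2)) (π / 2), cos x ≠ 0 := fun x hx =>
    (cos_pos_of_mem_Ioo hx).ne'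
  obtain ⟨c, hc, hc0⟩ := exists_hasDerivAt_eq_zero' (f := f ∘ tan)
    (f' := fun x => f' (tan x) * (1 / cos x ^ 2)) (neg_lt_self pi_div_two_pos)
    (hbot.comp tendsto_tan_neg_pi_div_two) (htop.comp tendsto_tan_pi_div_two)
    (fun x hx => (hf (tan x)).comp x (hasDerivAt_tan (hcos x hx)))
  exact ⟨tan c, by simpa [hcos c hc] using hc0⟩

theorem exists_gt_hasDerivAt_eq_zero (hf : ∀ x, HasDerivAt f (f' x) x) {a : ℝ}
    (htop : Tendsto f atTop (𝓝 (f a))) : ∃ c, a < c ∧ f' c = 0 := by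
  obtain ⟨c, hc⟩ := exists_hasDerivAt_eq_zero_of_tendsto_atBot_atTop
    (f := fun x => f (a + exp x)) (f' := fun x => f' (a + exp x) * exp x)
    (fun x => (hf _).comp x ((hasDerivAt_exp x).const_add a))
    ((hf a).continuousAt.tendsto.comp (by simpa using tendsto_exp_atBot.const_add a))
    (htop.comp (tendsto_atTop_add_const_left _ a tendsto_exp_atTop))
  exact ⟨a + exp c, by linarith [exp_pos c], by simpa [(exp_pos c).ne'] using hc⟩

theorem exists_lt_hasDerivAt_eq_zero (hf : ∀ x, HasDerivAt f (f' x) x) {a : ℝ}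
    (hbot : Tendsto f atBot (𝓝 (f a))) : ∃ c, c < a ∧ f' c = 0 := by
  obtain ⟨c, hc⟩ := exists_hasDerivAt_eq_zero_of_tendsto_atBot_atTop
    (f := fun x => f (a - exp x)) (f' := fun x => -(f' (a - exp x) * exp x))
    (fun x => ((hf _).comp x ((hasDerivAt_exp x).const_sub a)).congr_deriv (by ring))
    ((hf a).continuousAt.tendsto.comp (by simpa using tendsto_exp_atBot.const_sub a))
    (hbot.comp (tendsto_atBot_add_const_left _ a
      (tendsto_neg_atTop_atBot.comp tendsto_exp_atTop)))
  exact ⟨a - exp c, by linarith [exp_pos c], by simpa [(exp_pos c).ne'] using hc⟩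

theorem card_lt_ncard_deriv_eq_zero_of_forall_lt (hf : ∀ x, HasDerivAt f (f' x) x)
    (hfin : {x | f' x = 0}.Finite) (hbot : Tendsto f atBot (𝓝 0)) (s : Finset ℝ)
    (hs : ∀ x ∈ s, f x = 0) {b : ℝ} (hb : f b = 0) (hsb : ∀ x ∈ s, x < b) :
    s.card < {x | x < b ∧ f' x = 0}.ncard := by
  have hfin' : ∀ b, {x | x < b ∧ f' x = 0}.Finite := fun b => hfin.subset fun x hx => hx.2
  induction s using Finset.induction_on_max generalizing b with
  | empty =>
    obtain ⟨c, hcb, hc⟩ := exists_lt_hasDerivAt_eq_zero hf (hb ▸ hbot)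
    exact (ncard_pos (hfin' b)).2 ⟨c, hcb, hc⟩
  | insert a s hlt ih =>
    have ha : f a = 0 := hs a (Finset.mem_insert_self a s)
    obtain ⟨c, ⟨hac, hcb⟩, hc⟩ := exists_hasDerivAt_eq_zero (hsb a (Finset.mem_insert_self a s))
      (continuous_iff_continuousAt.2 fun x => (hf x).continuousAt).continuousOn (ha.trans hb.symm)
      (fun x _ => hf x)
    have hsub : {x | x < a ∧ f' x = 0} ⊂ {x | x < b ∧ f' x = 0} := by
      refine (ssubset_iff_of_subset ?_).2 ⟨c, ⟨hcb, hc⟩, fun h => h.1.not_gt hac⟩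
      exact fun x hx => ⟨hx.1.trans (hac.trans hcb), hx.2⟩
    calc (insert a s).card = s.card + 1 := Finset.card_insert_of_notMem fun h => (hlt a h).false
      _ ≤ {x | x < a ∧ f' x = 0}.ncard :=
        ih (fun x hx => hs x (Finset.mem_insert_of_mem hx)) ha hlt
      _ < {x | x < b ∧ f' x = 0}.ncard := ncard_lt_ncard hsub (hfin' b)

theorem card_lt_ncard_deriv_eq_zero (hf : ∀ x, HasDerivAt f (f' x) x)
    (hfin : {x | f' x = 0}.Finite) (hlim : Tendsto f (cocompact ℝ) (𝓝 0)) (s : Finset ℝ)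
    (hs : ∀ x ∈ s, f x = 0) : s.card < {x | f' x = 0}.ncard := by
  rw [cocompact_eq_atBot_atTop, tendsto_sup] at hlim
  obtain ⟨hbot, htop⟩ := hlim
  rcases s.eq_empty_or_nonempty with rfl | hne
  · obtain ⟨c, hc⟩ := exists_hasDerivAt_eq_zero_of_tendsto_atBot_atTop hf hbot htop
    exact (ncard_pos hfin).2 ⟨c, hc⟩
  set b := s.max' hne
  have hb : f b = 0 := hs b (s.max'_mem hne)
  obtain ⟨c, hbc, hc⟩ := exists_gt_hasDerivAt_eq_zero hf (hb ▸ htop)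
  have hsub : {x | x < b ∧ f' x = 0} ⊂ {x | f' x = 0} := by
    refine (ssubset_iff_of_subset ?_).2 ⟨c, hc, fun h => h.1.not_gt hbc⟩
    exact fun x hx => hx.2
  calc s.card = (s.erase b).card + 1 := (Finset.card_erase_add_one (s.max'_mem hne)).symm
    _ ≤ {x | x < b ∧ f' x = 0}.ncard :=
      card_lt_ncard_deriv_eq_zero_of_forall_lt hf hfin hbot _
        (fun x hx => hs x (Finset.mem_of_mem_erase hx)) hb
        (fun x hx => (s.le_max' x (Finset.mem_of_mem_erase hx)).lt_of_ne
          (Finset.ne_of_mem_erase hx))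
    _ < {x | f' x = 0}.ncard := ncard_lt_ncard hsub hfin

end Rolle

section Gaussian

variable {R : Type*} [CommRing R] [Algebra R ℝ]

theorem hasDerivAt_aeval_mul_exp_neg_sq_div_two (p : R[X]) (x : ℝ) :
    HasDerivAt (fun y => aeval y p * exp (-(y ^ 2 / 2)))
      (-(aeval x (X * p - derivative p) * exp (-(x ^ 2 / 2)))) x := by
  have hexp : HasDerivAt (fun y => exp (-(y ^ 2 / 2))) (exp (-(x ^ 2 / 2)) * -x) x := by
    simpa using (((hasDerivAt_pow 2 x).div_const 2).neg).exp
  refine ((p.hasDerivAt_aeval x).mul hexp).congr_deriv ?_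
  simp only [map_sub, map_mul, aeval_X]
  ring

theorem tendsto_aeval_mul_exp_neg_sq_div_two_cocompact (p : R[X]) :
    Tendsto (fun x : ℝ => aeval x p * exp (-(x ^ 2 / 2))) (cocompact ℝ) (𝓝 0) := by
  induction p using Polynomial.induction_on' with
  | add p q hp hq => simpa [add_mul] using hp.add hq
  | monomial n a =>
    have hmon : Tendsto (fun x : ℝ => x ^ n * exp (-(x ^ 2 / 2))) (cocompact ℝ) (𝓝 0) := by
      refine tendsto_zero_iff_norm_tendsto_zero.2 ?_
      convert tendsto_rpow_abs_mul_exp_neg_mul_sq_cocompact one_half_pos n using 2 with x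
      rw [norm_mul, norm_pow, norm_of_nonneg (exp_pos _).le, rpow_natCast, Real.norm_eq_abs]
      ring_nf
    simpa [mul_assoc] using hmon.const_mul (algebraMap R ℝ a)

end Gaussian

theorem setOf_aeval_hermite_eq_zero (n : ℕ) :
    {x : ℝ | aeval x (hermite n) = 0} = (hermite n).rootSet ℝ :=
  Set.ext fun _ => (mem_rootSet_of_ne (hermite_monic n).ne_zero).symm

theorem ncard_rootSet_hermite_lt_succ (n : ℕ) :
    ((hermite n).rootSet ℝ).ncard < ((hermite (n + 1)).rootSet ℝ).ncard := by
  have hzeros : {x : ℝ | -(aeval x (hermite (n + 1)) * exp (-(x ^ 2 / 2))) = 0}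
      = (hermite (n + 1)).rootSet ℝ := by
    simp only [neg_eq_zero, mul_eq_zero, (exp_pos _).ne', or_false]
    exact setOf_aeval_hermite_eq_zero _
  rw [Set.ncard_eq_toFinset_card _ (rootSet_finite _ ℝ), ← hzeros]
  refine card_lt_ncard_deriv_eq_zero (fun x => ?_) (hzeros ▸ rootSet_finite _ ℝ)
    (tendsto_aeval_mul_exp_neg_sq_div_two_cocompact (hermite n)) _ fun x hx => ?_
  · simpa only [hermite_succ] using hasDerivAt_aeval_mul_exp_neg_sq_div_two (hermite n) x
  · rw [Set.Finite.mem_toFinset, ← setOf_aeval_hermite_eq_zero] at hx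
    simp [hx.out]

/-- The probabilist's Hermite polynomial `He_n` has exactly `n` distinct real roots
(it is a degree-`n` polynomial all of whose roots are real and simple). -/
theorem hermite_n_distinct_real_roots (n : ℕ) :
    {x : ℝ | Polynomial.aeval x (Polynomial.hermite n) = 0}.ncard = n := by
  rw [setOf_aeval_hermite_eq_zero]
  refine le_antisymm ((ncard_rootSet_le _ _).trans natDegree_hermite.le) ?_
  induction n with
  | zero => exact Nat.zero_le _
  | succ n ih => exact ih.trans_lt (ncard_rootSet_hermite_lt_succ n)
end
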